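/- arXiv:nlin/0603018 — 18 statements merged into one kernel-verified Lean document; each statement's English description precedes it below -/
import Mathlib

section
/- For every n ≥ 1 one has Ẽ_n = − Σ_{k=1}^{n} (Ẽ_{n−k})_+ · L^k. (Lemma 2.1 of the paper.) -/
/-! Induction on n: splitting off the term k = 1 and factoring L out of the remaining terms
expresses the sum for n + 1 as (Ẽ_n)_+ L + (sum for n) L = (Ẽ_n)_+ L − Ẽ_n L = −(Ẽ_n)_− L. -/

open Finset

theorem Finset.sum_Icc_one_succ_sub_mul_pow {R : Type*} [Semiring R] (f : ℕ → R) (L : R) (n : ℕ) :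
    ∑ k ∈ Icc 1 (n + 1), f (n + 1 - k) * L ^ k =
      f n * L + (∑ k ∈ Icc 1 n, f (n - k) * L ^ k) * L := by
  rw [← sum_Ioc_add_eq_sum_Icc (by omega), ← Icc_add_one_left_eq_Ioc, ← map_add_right_Icc, sum_map,
    sum_mul, add_comm]
  simp only [addRightEmbedding_apply, Nat.add_sub_add_right, Nat.add_sub_cancel,
    pow_succ, pow_zero, one_mul, mul_assoc]

theorem stmt_0_general {R : Type*} [Ring R]
    (Pm : R →+ R)
    (hone : Pm 1 = 0)
    (L : R) (Et : ℕ → R)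
    (hEt0 : Et 0 = 1) (hEt1 : Et 1 = -L)
    (hEtrec : ∀ n, 1 ≤ n → Et (n + 1) = Pm (Et n) * L) :
    ∀ n, 1 ≤ n →
      Et n = -∑ k ∈ Finset.Icc 1 n, (Et (n - k) - Pm (Et (n - k))) * L ^ k := by
  intro n hn
  induction n, hn using Nat.le_induction with
  | base => simp [hEt1, hEt0, hone]
  | succ n hn ih =>
    rw [sum_Icc_one_succ_sub_mul_pow (fun j ↦ Et j - Pm (Et j)), ← neg_eq_iff_eq_neg.mpr ih,
      hEtrec n hn]
    noncomm_ring

/-- Lemma 2.1: `Ẽ_n = − Σ_{k=1}^{n} (Ẽ_{n−k})_+ · L^k` for `n ≥ 1`. -/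
theorem stmt_0 {R : Type*} [Ring R]
    (Pm : R →+ R)
    (hidem : ∀ x, Pm (Pm x) = Pm x)
    (hone : Pm 1 = 0)
    (hmm : ∀ x y, Pm (Pm x * Pm y) = Pm x * Pm y)
    (hpp : ∀ x y, Pm ((x - Pm x) * (y - Pm y)) = 0)
    (L : R) (Et : ℕ → R)
    (hEt0 : Et 0 = 1) (hEt1 : Et 1 = -L)
    (hEtrec : ∀ n, 1 ≤ n → Et (n + 1) = Pm (Et n) * L) :
    ∀ n, 1 ≤ n →
      Et n = -∑ k ∈ Finset.Icc 1 n, (Et (n - k) - Pm (Et (n - k))) * L ^ k :=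
  stmt_0_general Pm hone L Et hEt0 hEt1 hEtrec
end

section
/- If L satisfies the hierarchy equations d_k(L) = [(L^k)_+, L] for all k ≥ 1, then for every n ≥ 1 one has n·Ẽ_n = − L^n − Σ_{k=1}^{n−1} ( d_k(Ẽ_{n−k}) + Ẽ_{n−k} ▵ L^k ). (Lemma 2.2 of the paper.) -/
/-- Lemma 2.2: as a consequence of the hierarchy `d_k(L) = [(L^k)_+, L]`,
`n·Ẽ_n = − L^n − Σ_{k=1}^{n−1} ( d_k(Ẽ_{n−k}) + Ẽ_{n−k} ▵ L^k )` for `n ≥ 1`,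
where `X ▵ Y = (X)_+·Y − X·(Y)_−`. -/
theorem stmt_1 {R : Type*} [Ring R]
    (Pm : R →+ R)
    (hidem : ∀ x, Pm (Pm x) = Pm x)
    (hone : Pm 1 = 0)
    (hmm : ∀ x y, Pm (Pm x * Pm y) = Pm x * Pm y)
    (hpp : ∀ x y, Pm ((x - Pm x) * (y - Pm y)) = 0)
    (d : ℕ → R →+ R)
    (hder : ∀ k, 1 ≤ k → ∀ a b, d k (a * b) = d k a * b + a * d k b)
    (hdP : ∀ k, 1 ≤ k → ∀ x, d k (Pm x) = Pm (d k x))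
    (L : R)
    (hhier : ∀ k, 1 ≤ k →
      d k L = (L ^ k - Pm (L ^ k)) * L - L * (L ^ k - Pm (L ^ k)))
    (Et : ℕ → R)
    (hEt0 : Et 0 = 1) (hEt1 : Et 1 = -L)
    (hEtrec : ∀ n, 1 ≤ n → Et (n + 1) = Pm (Et n) * L) :
    ∀ n, 1 ≤ n →
      n • Et n = -L ^ n - ∑ k ∈ Finset.Icc 1 (n - 1),
        (d k (Et (n - k)) +
          ((Et (n - k) - Pm (Et (n - k))) * L ^ k - Et (n - k) * Pm (L ^ k))) := by
  have key1 : ∀ x y : R, Pm ((x - Pm x) * y) = Pm (x * Pm y) - Pm x * Pm y := by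
    intro x y
    have h : (x - Pm x) * y = (x * Pm y - Pm x * Pm y) + (x - Pm x) * (y - Pm y) := by
      noncomm_ring
    rw [h, map_add, hpp, add_zero, map_sub, hmm]
  have main : ∀ m : ℕ, (m + 1) • Et (m + 1) =
      -L ^ (m + 1) - ∑ k ∈ Finset.Icc 1 m,
        (d k (Et (m + 1 - k)) +
          ((Et (m + 1 - k) - Pm (Et (m + 1 - k))) * L ^ k - Et (m + 1 - k) * Pm (L ^ k))) := by
    intro m
    induction m with
    | zero => simp [hEt1]
    | succ m ih =>
      have hrec : Et (m + 1 + 1) = Pm (Et (m + 1)) * L := hEtrec (m + 1) (by omega)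
      have key2 : ∀ k, 1 ≤ k → k ≤ m →
          d k (Et (m + 1 + 1 - k)) +
            ((Et (m + 1 + 1 - k) - Pm (Et (m + 1 + 1 - k))) * L ^ k
              - Et (m + 1 + 1 - k) * Pm (L ^ k))
          = Pm (d k (Et (m + 1 - k)) +
              ((Et (m + 1 - k) - Pm (Et (m + 1 - k))) * L ^ k
                - Et (m + 1 - k) * Pm (L ^ k))) * L
            + (Pm (Et (m + 1 - k)) * (L ^ k * L)
                - Pm (Pm (Et (m + 1 - k)) * L) * L ^ k) := by
        intro k hk1 hk2
        have e0 : m + 1 + 1 - k = (m + 1 - k) + 1 := by omega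
        have e1 : Et (m + 1 + 1 - k) = Pm (Et (m + 1 - k)) * L := by
          rw [e0, hEtrec _ (by omega)]
        have e2 : d k (Et (m + 1 + 1 - k)) = Pm (d k (Et (m + 1 - k))) * L
            + Pm (Et (m + 1 - k)) * ((L ^ k - Pm (L ^ k)) * L - L * (L ^ k - Pm (L ^ k))) := by
          rw [e1, hder k hk1, hdP k hk1, hhier k hk1]
        rw [e2, e1, map_add, map_sub, key1]
        noncomm_ring
      have hsplit : ∑ k ∈ Finset.Icc 1 m, (d k (Et (m + 1 + 1 - k)) +
            ((Et (m + 1 + 1 - k) - Pm (Et (m + 1 + 1 - k))) * L ^ k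
              - Et (m + 1 + 1 - k) * Pm (L ^ k)))
          = (∑ k ∈ Finset.Icc 1 m, Pm (d k (Et (m + 1 - k)) +
              ((Et (m + 1 - k) - Pm (Et (m + 1 - k))) * L ^ k
                - Et (m + 1 - k) * Pm (L ^ k))) * L)
            + ∑ k ∈ Finset.Icc 1 m, (Pm (Et (m + 1 - k)) * (L ^ k * L)
                - Pm (Pm (Et (m + 1 - k)) * L) * L ^ k) := by
        rw [← Finset.sum_add_distrib]
        refine Finset.sum_congr rfl fun k hk => ?_
        simp only [Finset.mem_Icc] at hk
        exact key2 k hk.1 hk.2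
      have tele : ∑ k ∈ Finset.Icc 1 m, (Pm (Et (m + 1 - k)) * (L ^ k * L)
            - Pm (Pm (Et (m + 1 - k)) * L) * L ^ k)
          = Pm (Et 1) * L ^ (m + 1) - Pm (Et (m + 1)) * L := by
        rw [← Finset.Ico_add_one_right_eq_Icc, Finset.sum_Ico_eq_sum_range]
        simp only [Nat.succ_sub_one, Nat.add_sub_cancel]
        have hcong : ∀ i ∈ Finset.range m,
            Pm (Et (m + 1 - (1 + i))) * (L ^ (1 + i) * L)
              - Pm (Pm (Et (m + 1 - (1 + i))) * L) * L ^ (1 + i)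
            = (fun j => Pm (Et (m + 1 - j)) * (L ^ j * L)) (i + 1)
              - (fun j => Pm (Et (m + 1 - j)) * (L ^ j * L)) i := by
          intro i hi
          simp only [Finset.mem_range] at hi
          have h2 : m + 1 - (1 + i) = m - i := by omega
          have h2' : m + 1 - (i + 1) = m - i := by omega
          have h4 : Et (m + 1 - i) = Pm (Et (m - i)) * L := by
            have h3 : m + 1 - i = (m - i) + 1 := by omega
            rw [h3, hEtrec _ (by omega)]
          simp only [h2, h2', h4, pow_succ, Nat.add_comm 1 i]
        rw [Finset.sum_congr rfl hcong,
          Finset.sum_range_sub (fun j => Pm (Et (m + 1 - j)) * (L ^ j * L))]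
        simp only [Nat.add_sub_cancel_left, Nat.sub_zero, pow_zero, one_mul, pow_succ]
      rw [Finset.sum_Icc_succ_top (show (1:ℕ) ≤ m + 1 by omega)]
      have hx : m + 1 + 1 - (m + 1) = 1 := by omega
      simp only [hx]
      rw [hsplit, tele, ← Finset.sum_mul, ← map_sum]
      rw [hrec, succ_nsmul, ← smul_mul_assoc, ← map_nsmul, ih]
      rw [hEt1]
      simp only [map_neg]
      rw [hhier (m + 1) (by omega)]
      simp only [map_sub, map_neg, pow_succ]
      noncomm_ring
  intro n hn
  obtain ⟨m, rfl⟩ : ∃ m, n = m + 1 := ⟨n - 1, (Nat.succ_pred_eq_of_pos hn).symm⟩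
  simpa using main m
end

section
/- Suppose L satisfies the hierarchy equations d_k(L) = [(L^k)_+, L] for all k ≥ 1, and let (E_n)_{n≥0} be the sequence in R determined by E_0 = 1 and the recursion n·E_n = − Σ_{k=1}^{n} ( d_k(E_{n−k}) + E_{n−k}·(L^k)_+ ) for n ≥ 1. Then E_n = (Ẽ_n)_+ for all n ≥ 0. (Theorem 2.1 of the paper.) -/
/-!
Work in `R⟦X⟧` with the derivation `Δ = θ + ∑_{k ≥ 1} X^k d_k` (`fullDeriv`), where `θ`
multiplies the `n`-th coefficient by `n`. With `B = ∑_{k ≥ 1} (L^k)_+ X^k` (`powPlus`), the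
recursion for `E` says `Δ E + E B = 0`, and it determines `E` because `n` is invertible in `ℚ`.

Put `Ψ = 1 - XL` (`wave`), `C = ∑_{k ≥ 1} (L^k)_- X^k` (`powMinus`) and `M = ∑ (Ẽ_n)_- X^n`.
Since `B + C = Ψ⁻¹ - 1`, the hierarchy equations say `Δ Ψ = -(C Ψ + Ψ B)`, and the recursion
for `Ẽ` says `∑ (Ẽ_n)_+ X^n = (1 - M) Ψ`. Hence this series satisfies `Δ E + E B = -Y Ψ` with
`Y = Δ M + (1 - M) C`. The left side has coefficients in `R_+` and `Y` has coefficients in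
`R_-`; comparing the coefficients of `Y Ψ` one degree at a time forces `Y = 0`.
-/

open PowerSeries Finset

noncomputable section

namespace LaxHierarchy

section Derivations

variable {R : Type*} [Ring R]

def eulerDeriv : R⟦X⟧ →+ R⟦X⟧ :=
  AddMonoidHom.mk' (fun F => mk fun n => n • coeff n F) fun F G => by
    ext n; simp [smul_add]

theorem coeff_eulerDeriv (F : R⟦X⟧) (n : ℕ) : coeff n (eulerDeriv F) = n • coeff n F := by
  simp [eulerDeriv]

theorem eulerDeriv_mul (F G : R⟦X⟧) :
    eulerDeriv (F * G) = eulerDeriv F * G + F * eulerDeriv G := by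
  ext n
  simp only [coeff_eulerDeriv, map_add, coeff_mul, smul_sum, ← sum_add_distrib]
  refine sum_congr rfl fun p hp => ?_
  rw [← mem_antidiagonal.mp hp, add_smul, smul_mul_assoc, mul_smul_comm]

theorem eulerDeriv_X_mul (F : R⟦X⟧) : eulerDeriv (X * F) = X * F + X * eulerDeriv F := by
  ext (_ | n)
  · simp [coeff_eulerDeriv]
  · simp only [coeff_eulerDeriv, map_add, coeff_succ_X_mul, succ_nsmul']

def mapCoeff (δ : R →+ R) (F : R⟦X⟧) : R⟦X⟧ := mk fun n => δ (coeff n F)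

theorem coeff_mapCoeff (δ : R →+ R) (F : R⟦X⟧) (n : ℕ) :
    coeff n (mapCoeff δ F) = δ (coeff n F) :=
  coeff_mk _ _

theorem mapCoeff_mul {δ : R →+ R} (hδ : ∀ a b, δ (a * b) = δ a * b + a * δ b)
    (F G : R⟦X⟧) : mapCoeff δ (F * G) = mapCoeff δ F * G + F * mapCoeff δ G := by
  ext n
  simp only [coeff_mapCoeff, map_add, coeff_mul, map_sum, hδ, sum_add_distrib]

theorem mapCoeff_X_mul (δ : R →+ R) (F : R⟦X⟧) : mapCoeff δ (X * F) = X * mapCoeff δ F := by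
  ext (_ | n) <;> simp [coeff_mapCoeff]

def flowDeriv (d : ℕ → R →+ R) : R⟦X⟧ →+ R⟦X⟧ :=
  AddMonoidHom.mk' (fun F => mk fun n => ∑ k ∈ Icc 1 n, d k (coeff (n - k) F)) fun F G => by
    ext n; simp [sum_add_distrib]

variable (d : ℕ → R →+ R)

theorem coeff_flowDeriv (F : R⟦X⟧) (n : ℕ) :
    coeff n (flowDeriv d F) = ∑ k ∈ Icc 1 n, d k (coeff (n - k) F) := by
  simp [flowDeriv]

theorem coeff_flowDeriv_eq_sum_X_pow_mul {n N : ℕ} (h : n ≤ N) (F : R⟦X⟧) :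
    coeff n (flowDeriv d F) = ∑ k ∈ Icc 1 N, coeff n (X ^ k * mapCoeff (d k) F) := by
  simp only [coeff_X_pow_mul', coeff_mapCoeff, sum_ite, sum_const_zero, add_zero,
    coeff_flowDeriv]
  congr 1
  ext k
  simp only [mem_Icc, mem_filter]
  omega

theorem flowDeriv_mul (hder : ∀ k, 1 ≤ k → ∀ a b, d k (a * b) = d k a * b + a * d k b)
    (F G : R⟦X⟧) : flowDeriv d (F * G) = flowDeriv d F * G + F * flowDeriv d G := by
  ext n
  have hX (k : ℕ) (H : R⟦X⟧) : X ^ k * (F * H) = F * (X ^ k * H) := by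
    rw [← mul_assoc, ← (commute_X_pow F k).eq, mul_assoc]
  calc coeff n (flowDeriv d (F * G))
      = ∑ k ∈ Icc 1 n,
          coeff n (X ^ k * mapCoeff (d k) F * G + F * (X ^ k * mapCoeff (d k) G)) := by
        rw [coeff_flowDeriv_eq_sum_X_pow_mul d le_rfl]
        refine sum_congr rfl fun k hk => ?_
        rw [mapCoeff_mul (hder k (mem_Icc.mp hk).1), mul_add, mul_assoc, hX]
    _ = coeff n (flowDeriv d F * G + F * flowDeriv d G) := by
        simp only [map_add, sum_add_distrib, coeff_mul _ (X ^ _ * _) G,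
          coeff_mul _ F (X ^ _ * _)]
        rw [sum_comm, sum_comm (s := Icc 1 n), coeff_mul, coeff_mul]
        congr 1 <;> refine sum_congr rfl fun p hp => ?_
        · rw [← sum_mul, coeff_flowDeriv_eq_sum_X_pow_mul d
            (HasAntidiagonal.antidiagonal.fst_le hp)]
        · rw [← mul_sum, coeff_flowDeriv_eq_sum_X_pow_mul d
            (HasAntidiagonal.antidiagonal.snd_le hp)]

theorem flowDeriv_X_mul (F : R⟦X⟧) : flowDeriv d (X * F) = X * flowDeriv d F := by
  ext (_ | n)
  · simp [coeff_flowDeriv]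
  · rw [coeff_succ_X_mul, coeff_flowDeriv_eq_sum_X_pow_mul d le_rfl,
      coeff_flowDeriv_eq_sum_X_pow_mul d n.le_succ]
    refine sum_congr rfl fun k _ => ?_
    rw [mapCoeff_X_mul, ← mul_assoc, ← (commute_X_pow X k).eq, mul_assoc, coeff_succ_X_mul]

theorem coeff_flowDeriv_C (a : R) (n : ℕ) :
    coeff n (flowDeriv d (C a)) = if n = 0 then 0 else d n a := by
  rw [coeff_flowDeriv]
  split_ifs with hn
  · simp [hn]
  · rw [sum_eq_single n, tsub_self, coeff_zero_C]
    · intro k hk hkn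
      rw [coeff_C, if_neg (by grind), map_zero]
    · exact fun h => absurd (mem_Icc.mpr ⟨by omega, le_rfl⟩) h

def fullDeriv : R⟦X⟧ →+ R⟦X⟧ := eulerDeriv + flowDeriv d

theorem coeff_fullDeriv (F : R⟦X⟧) (n : ℕ) :
    coeff n (fullDeriv d F) = n • coeff n F + ∑ k ∈ Icc 1 n, d k (coeff (n - k) F) := by
  simp [fullDeriv, coeff_eulerDeriv, coeff_flowDeriv]

theorem fullDeriv_mul (hder : ∀ k, 1 ≤ k → ∀ a b, d k (a * b) = d k a * b + a * d k b)
    (F G : R⟦X⟧) : fullDeriv d (F * G) = fullDeriv d F * G + F * fullDeriv d G := by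
  simp only [fullDeriv, AddMonoidHom.add_apply, eulerDeriv_mul, flowDeriv_mul d hder]
  noncomm_ring

theorem fullDeriv_one (hder : ∀ k, 1 ≤ k → ∀ a b, d k (a * b) = d k a * b + a * d k b) :
    fullDeriv d (1 : R⟦X⟧) = 0 := by
  simpa using fullDeriv_mul d hder 1 1

theorem fullDeriv_X_mul (F : R⟦X⟧) : fullDeriv d (X * F) = X * F + X * fullDeriv d F := by
  simp only [fullDeriv, AddMonoidHom.add_apply, eulerDeriv_X_mul, flowDeriv_X_mul]
  noncomm_ring

theorem coeff_fullDeriv_C (a : R) (n : ℕ) :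
    coeff n (fullDeriv d (C a)) = if n = 0 then 0 else d n a := by
  rw [fullDeriv, AddMonoidHom.add_apply, map_add, coeff_eulerDeriv, coeff_flowDeriv_C, coeff_C]
  split_ifs with hn <;> simp [hn]

def _root_.NonUnitalSubring.powerSeries (S : NonUnitalSubring R) : NonUnitalSubring R⟦X⟧ where
  carrier := {F | ∀ n, coeff n F ∈ S}
  add_mem' hF hG n := by rw [map_add]; exact add_mem (hF n) (hG n)
  zero_mem' n := by rw [map_zero]; exact zero_mem S
  neg_mem' hF n := by rw [map_neg]; exact neg_mem (hF n)
  mul_mem' hF hG n := by rw [coeff_mul]; exact sum_mem fun p _ => mul_mem (hF _) (hG _)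

theorem fullDeriv_mem {S : NonUnitalSubring R} (hd : ∀ k, 1 ≤ k → ∀ x ∈ S, d k x ∈ S)
    {F : R⟦X⟧} (hF : F ∈ S.powerSeries) : fullDeriv d F ∈ S.powerSeries := fun n => by
  rw [coeff_fullDeriv]
  exact add_mem (nsmul_mem (hF n) n) (sum_mem fun k hk => hd k (mem_Icc.mp hk).1 _ (hF _))

end Derivations

section Projection

variable {R : Type*} [Ring R] {Pm : R →+ R}

variable (Pm) in
def plusPart (F : R⟦X⟧) : R⟦X⟧ := F - mapCoeff Pm F

variable (Pm) in
theorem coeff_plusPart (F : R⟦X⟧) (n : ℕ) :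
    coeff n (plusPart Pm F) = coeff n F - Pm (coeff n F) := by
  rw [plusPart, map_sub, coeff_mapCoeff]

def plusSubring (hpp : ∀ x y, Pm ((x - Pm x) * (y - Pm y)) = 0) : NonUnitalSubring R :=
  { Pm.ker with
    mul_mem' := fun {x y} (hx : Pm x = 0) (hy : Pm y = 0) => by
      simpa [hx, hy] using hpp x y }

def minusSubring (hmm : ∀ x y, Pm (Pm x * Pm y) = Pm x * Pm y) : NonUnitalSubring R :=
  { Pm.range with
    mul_mem' := by
      rintro _ _ ⟨x, rfl⟩ ⟨y, rfl⟩
      exact ⟨_, hmm x y⟩ }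

variable (hmm : ∀ x y, Pm (Pm x * Pm y) = Pm x * Pm y)
  (hpp : ∀ x y, Pm ((x - Pm x) * (y - Pm y)) = 0)

theorem eq_zero_of_mem_minusSubring_of_mem_plusSubring (hidem : ∀ x, Pm (Pm x) = Pm x) :
    ∀ x ∈ minusSubring hmm, x ∈ plusSubring hpp → x = 0 := by
  rintro _ ⟨y, rfl⟩ (hy : Pm (Pm y) = 0)
  rwa [hidem] at hy

theorem plusPart_mem (hidem : ∀ x, Pm (Pm x) = Pm x) (F : R⟦X⟧) :
    plusPart Pm F ∈ (plusSubring hpp).powerSeries := fun n => by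
  change Pm (coeff n (plusPart Pm F)) = 0
  rw [coeff_plusPart, map_sub, hidem, sub_self]

theorem mapCoeff_mem (F : R⟦X⟧) : mapCoeff Pm F ∈ (minusSubring hmm).powerSeries := fun n =>
  ⟨coeff n F, (coeff_mapCoeff Pm F n).symm⟩

variable {d : ℕ → R →+ R}

theorem map_mem_plusSubring (hdP : ∀ k, 1 ≤ k → ∀ x, d k (Pm x) = Pm (d k x)) :
    ∀ k, 1 ≤ k → ∀ x ∈ plusSubring hpp, d k x ∈ plusSubring hpp := by
  intro k hk x (hx : Pm x = 0)
  change Pm (d k x) = 0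
  rw [← hdP k hk, hx, map_zero]

theorem map_mem_minusSubring (hdP : ∀ k, 1 ≤ k → ∀ x, d k (Pm x) = Pm (d k x)) :
    ∀ k, 1 ≤ k → ∀ x ∈ minusSubring hmm, d k x ∈ minusSubring hmm := by
  rintro k hk _ ⟨y, rfl⟩
  exact ⟨d k y, (hdP k hk y).symm⟩

end Projection

section Wave

variable {R : Type*} [Ring R] (Pm : R →+ R) (L : R)

def geom : R⟦X⟧ := mk fun k => L ^ k

def wave : R⟦X⟧ := 1 - X * C L

theorem coeff_zero_mul_wave (F : R⟦X⟧) : coeff 0 (F * wave L) = coeff 0 F := by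
  simp [wave, mul_sub]

theorem coeff_succ_mul_wave (F : R⟦X⟧) (n : ℕ) :
    coeff (n + 1) (F * wave L) = coeff (n + 1) F - coeff n F * L := by
  rw [wave, mul_sub, mul_one, map_sub, ← mul_assoc, coeff_mul_C, coeff_succ_mul_X]

theorem geom_mul_wave : geom L * wave L = 1 := by
  ext (_ | n)
  · simp [coeff_zero_mul_wave, geom]
  · simp [coeff_succ_mul_wave, geom, coeff_one, pow_succ]

def powPlus : R⟦X⟧ := plusPart Pm (geom L - 1)

def powMinus : R⟦X⟧ := mapCoeff Pm (geom L - 1)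

theorem coeff_powPlus (k : ℕ) :
    coeff k (powPlus Pm L) = if k = 0 then 0 else L ^ k - Pm (L ^ k) := by
  rw [powPlus, coeff_plusPart, map_sub, coeff_one, geom, coeff_mk]
  split_ifs <;> simp_all

variable (d : ℕ → R →+ R)

theorem fullDeriv_C_of_hierarchy (hhier : ∀ k, 1 ≤ k →
      d k L = (L ^ k - Pm (L ^ k)) * L - L * (L ^ k - Pm (L ^ k))) :
    fullDeriv d (C L) = powPlus Pm L * C L - C L * powPlus Pm L := by
  ext n
  rw [coeff_fullDeriv_C, map_sub, coeff_mul_C, coeff_C_mul, coeff_powPlus]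
  split_ifs with hn
  · simp
  · exact hhier n (Nat.one_le_iff_ne_zero.mpr hn)

theorem fullDeriv_wave (hder : ∀ k, 1 ≤ k → ∀ a b, d k (a * b) = d k a * b + a * d k b)
    (hhier : ∀ k, 1 ≤ k →
      d k L = (L ^ k - Pm (L ^ k)) * L - L * (L ^ k - Pm (L ^ k))) :
    fullDeriv d (wave L) = -(powMinus Pm L * wave L + wave L * powPlus Pm L) := by
  have hΨ : fullDeriv d (wave L) =
      -(X * C L + X * (powPlus Pm L * C L - C L * powPlus Pm L)) := by
    rw [wave, map_sub, fullDeriv_one d hder, fullDeriv_X_mul,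
      fullDeriv_C_of_hierarchy Pm L d hhier, zero_sub]
  have hsplit : powMinus Pm L = geom L - 1 - powPlus Pm L :=
    eq_sub_of_add_eq' (sub_add_cancel _ _)
  calc fullDeriv d (wave L)
      = -((geom L * wave L - 1) +
          (X * C L + (powPlus Pm L * X) * C L - X * C L * powPlus Pm L)) := by
        rw [hΨ, geom_mul_wave, (commute_X (powPlus Pm L)).eq]; noncomm_ring
    _ = -(powMinus Pm L * wave L + wave L * powPlus Pm L) := by
        rw [hsplit, wave]; noncomm_ring

end Wave

section Dressing

variable {R : Type*} [Ring R]

theorem coeff_mul_eq_sum_Icc {G : R⟦X⟧} (hG : constantCoeff G = 0) (F : R⟦X⟧) (n : ℕ) :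
    coeff n (F * G) = ∑ k ∈ Icc 1 n, coeff (n - k) F * coeff k G := by
  rw [coeff_mul, ← Finset.Nat.sum_antidiagonal_swap]
  simp only [Prod.fst_swap, Prod.snd_swap]
  rw [Finset.Nat.sum_antidiagonal_eq_sum_range_succ (fun i j => coeff j F * coeff i G),
    Finset.range_eq_Ico, Finset.sum_eq_sum_Ico_succ_bot n.succ_pos]
  simp [hG, Finset.Ico_add_one_right_eq_Icc]

theorem eq_zero_of_mul_wave_mem {S T : NonUnitalSubring R} (hST : ∀ x ∈ S, x ∈ T → x = 0)
    {L : R} {Y : R⟦X⟧} (hY : Y ∈ S.powerSeries) (hYΨ : Y * wave L ∈ T.powerSeries) :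
    Y = 0 := by
  ext n
  rw [map_zero]
  induction n with
  | zero => exact hST _ (hY 0) (coeff_zero_mul_wave L Y ▸ hYΨ 0)
  | succ n ih =>
    have hn := hYΨ (n + 1)
    rw [coeff_succ_mul_wave, ih, zero_mul, sub_zero] at hn
    exact hST _ (hY _) hn

variable {Pm : R →+ R} {d : ℕ → R →+ R} {L : R} {Et : ℕ → R}

theorem plusPart_mk_eq_mul_wave (hone : Pm 1 = 0) (hEt0 : Et 0 = 1) (hEt1 : Et 1 = -L)
    (hEtrec : ∀ n, 1 ≤ n → Et (n + 1) = Pm (Et n) * L) :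
    plusPart Pm (mk Et) = (1 - mapCoeff Pm (mk Et)) * wave L := by
  ext (_ | _ | n) <;>
    simp only [coeff_zero_mul_wave, coeff_succ_mul_wave, coeff_plusPart, map_sub, coeff_one,
      coeff_mapCoeff, coeff_mk]
  · simp [hEt0]
  · simp [hEt0, hEt1, hone, neg_add_eq_sub]
  · simp [hEtrec, neg_add_eq_sub]

theorem fullDeriv_plusPart_add_mul_powPlus
    (hder : ∀ k, 1 ≤ k → ∀ a b, d k (a * b) = d k a * b + a * d k b)
    (hhier : ∀ k, 1 ≤ k →
      d k L = (L ^ k - Pm (L ^ k)) * L - L * (L ^ k - Pm (L ^ k)))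
    (hone : Pm 1 = 0) (hEt0 : Et 0 = 1) (hEt1 : Et 1 = -L)
    (hEtrec : ∀ n, 1 ≤ n → Et (n + 1) = Pm (Et n) * L) :
    fullDeriv d (plusPart Pm (mk Et)) + plusPart Pm (mk Et) * powPlus Pm L =
      -((fullDeriv d (mapCoeff Pm (mk Et)) + (1 - mapCoeff Pm (mk Et)) * powMinus Pm L) *
        wave L) := by
  rw [plusPart_mk_eq_mul_wave hone hEt0 hEt1 hEtrec, fullDeriv_mul d hder, map_sub,
    fullDeriv_one d hder, fullDeriv_wave Pm L d hder hhier]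
  noncomm_ring

theorem fullDeriv_plusPart_add_mul_powPlus_eq_zero (hidem : ∀ x, Pm (Pm x) = Pm x)
    (hone : Pm 1 = 0) (hmm : ∀ x y, Pm (Pm x * Pm y) = Pm x * Pm y)
    (hpp : ∀ x y, Pm ((x - Pm x) * (y - Pm y)) = 0)
    (hder : ∀ k, 1 ≤ k → ∀ a b, d k (a * b) = d k a * b + a * d k b)
    (hdP : ∀ k, 1 ≤ k → ∀ x, d k (Pm x) = Pm (d k x))
    (hhier : ∀ k, 1 ≤ k →
      d k L = (L ^ k - Pm (L ^ k)) * L - L * (L ^ k - Pm (L ^ k)))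
    (hEt0 : Et 0 = 1) (hEt1 : Et 1 = -L)
    (hEtrec : ∀ n, 1 ≤ n → Et (n + 1) = Pm (Et n) * L) :
    fullDeriv d (plusPart Pm (mk Et)) + plusPart Pm (mk Et) * powPlus Pm L = 0 := by
  have hdressing := fullDeriv_plusPart_add_mul_powPlus hder hhier hone hEt0 hEt1 hEtrec
  set M := mapCoeff Pm (mk Et)
  have hM : M ∈ (minusSubring hmm).powerSeries := mapCoeff_mem hmm _
  have hY : fullDeriv d M + (1 - M) * powMinus Pm L ∈ (minusSubring hmm).powerSeries := by
    rw [sub_mul, one_mul]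
    exact add_mem (fullDeriv_mem d (map_mem_minusSubring hmm hdP) hM)
      (sub_mem (mapCoeff_mem hmm _) (mul_mem hM (mapCoeff_mem hmm _)))
  have hYΨ : (fullDeriv d M + (1 - M) * powMinus Pm L) * wave L ∈
      (plusSubring hpp).powerSeries := by
    rw [← neg_mem_iff, ← hdressing]
    exact add_mem (fullDeriv_mem d (map_mem_plusSubring hpp hdP) (plusPart_mem hpp hidem _))
      (mul_mem (plusPart_mem hpp hidem _) (plusPart_mem hpp hidem _))
  rw [hdressing, eq_zero_of_mul_wave_mem
    (eq_zero_of_mem_minusSubring_of_mem_plusSubring hmm hpp hidem) hY hYΨ, zero_mul, neg_zero]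

theorem plusPart_recursion (hidem : ∀ x, Pm (Pm x) = Pm x)
    (hone : Pm 1 = 0) (hmm : ∀ x y, Pm (Pm x * Pm y) = Pm x * Pm y)
    (hpp : ∀ x y, Pm ((x - Pm x) * (y - Pm y)) = 0)
    (hder : ∀ k, 1 ≤ k → ∀ a b, d k (a * b) = d k a * b + a * d k b)
    (hdP : ∀ k, 1 ≤ k → ∀ x, d k (Pm x) = Pm (d k x))
    (hhier : ∀ k, 1 ≤ k →
      d k L = (L ^ k - Pm (L ^ k)) * L - L * (L ^ k - Pm (L ^ k)))
    (hEt0 : Et 0 = 1) (hEt1 : Et 1 = -L)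
    (hEtrec : ∀ n, 1 ≤ n → Et (n + 1) = Pm (Et n) * L) (n : ℕ) :
    n • (Et n - Pm (Et n)) = -∑ k ∈ Icc 1 n,
      (d k (Et (n - k) - Pm (Et (n - k))) +
        (Et (n - k) - Pm (Et (n - k))) * (L ^ k - Pm (L ^ k))) := by
  have h := congrArg (coeff n) (fullDeriv_plusPart_add_mul_powPlus_eq_zero hidem hone hmm hpp
    hder hdP hhier hEt0 hEt1 hEtrec)
  rw [map_add, coeff_fullDeriv, coeff_mul_eq_sum_Icc (by simpa using coeff_powPlus Pm L 0),
    map_zero, add_assoc, ← sum_add_distrib] at h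
  simp only [coeff_plusPart, coeff_mk] at h
  rw [eq_neg_iff_add_eq_zero, ← h]
  congr 1
  refine sum_congr rfl fun k hk => ?_
  rw [coeff_powPlus, if_neg (by grind)]

end Dressing

theorem eq_of_nat_smul_recursion {M : Type*} [AddCommGroup M] [Module ℚ M] {a b : ℕ → M}
    (Φ : ℕ → (ℕ → M) → M) (hΦ : ∀ n a b, (∀ k < n, a k = b k) → Φ n a = Φ n b)
    (h0 : a 0 = b 0) (ha : ∀ n : ℕ, 1 ≤ n → (n : ℚ) • a n = Φ n a)
    (hb : ∀ n : ℕ, 1 ≤ n → (n : ℚ) • b n = Φ n b) : a = b := by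
  funext n
  induction n using Nat.strong_induction_on with
  | _ n ih =>
    rcases Nat.eq_zero_or_pos n with rfl | hn
    · exact h0
    · refine smul_right_injective M (Nat.cast_ne_zero.mpr hn.ne' : (n : ℚ) ≠ 0) ?_
      exact (ha n hn).trans ((hΦ n a b ih).trans (hb n hn).symm)

end LaxHierarchy

end

/-- Theorem 2.1: if `L` satisfies the hierarchy and `(E_n)` is determined by
`E_0 = 1` and `n·E_n = − Σ_{k=1}^{n} ( d_k(E_{n−k}) + E_{n−k}·(L^k)_+ )`,
then `E_n = (Ẽ_n)_+` for all `n ≥ 0`. -/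
theorem stmt_2 {R : Type*} [Ring R] [Algebra ℚ R]
    (Pm : R →ₗ[ℚ] R)
    (hidem : ∀ x, Pm (Pm x) = Pm x)
    (hone : Pm 1 = 0)
    (hmm : ∀ x y, Pm (Pm x * Pm y) = Pm x * Pm y)
    (hpp : ∀ x y, Pm ((x - Pm x) * (y - Pm y)) = 0)
    (d : ℕ → R →+ R)
    (hder : ∀ k, 1 ≤ k → ∀ a b, d k (a * b) = d k a * b + a * d k b)
    (hdP : ∀ k, 1 ≤ k → ∀ x, d k (Pm x) = Pm (d k x))
    (L : R)
    (hhier : ∀ k, 1 ≤ k →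
      d k L = (L ^ k - Pm (L ^ k)) * L - L * (L ^ k - Pm (L ^ k)))
    (Et : ℕ → R)
    (hEt0 : Et 0 = 1) (hEt1 : Et 1 = -L)
    (hEtrec : ∀ n, 1 ≤ n → Et (n + 1) = Pm (Et n) * L)
    (E : ℕ → R)
    (hE0 : E 0 = 1)
    (hErec : ∀ n : ℕ, 1 ≤ n →
      (n : ℚ) • E n = -∑ k ∈ Finset.Icc 1 n,
        (d k (E (n - k)) + E (n - k) * (L ^ k - Pm (L ^ k)))) :
    ∀ n, E n = Et n - Pm (Et n) := by
  have hrec (n : ℕ) := LaxHierarchy.plusPart_recursion (Pm := Pm.toAddMonoidHom) hidem hone hmm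
    hpp hder hdP hhier hEt0 hEt1 hEtrec n
  refine congrFun (LaxHierarchy.eq_of_nat_smul_recursion
    (fun n x => -∑ k ∈ Icc 1 n, (d k (x (n - k)) + x (n - k) * (L ^ k - Pm (L ^ k))))
    ?_ (by rw [hE0, hEt0, hone, sub_zero]) hErec fun n _ => ?_)
  · intro n a b hab
    simp only [neg_inj]
    refine sum_congr rfl fun k hk => ?_
    rw [hab (n - k) (by grind)]
  · rw [Nat.cast_smul_eq_nsmul]
    exact hrec n
end

section
/- Let W ∈ R be invertible and set E_n := χ_n(W)·W^{−1} for n ≥ 0. Then the zero-curvature identities Σ_{k=0}^{m} χ_k(E_n)·E_{m−k} = Σ_{k=0}^{n} χ_k(E_m)·E_{n−k} hold for all m, n ≥ 0. (Coefficient form of the integrability conditions (2.15) of the paper.) -/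
/-- Coefficient form of the zero-curvature conditions (2.15): for a
Hasse–Schmidt family `χ`, an invertible `W` and `E_n := χ_n(W)·W⁻¹`,
`Σ_{k=0}^{m} χ_k(E_n)·E_{m−k} = Σ_{k=0}^{n} χ_k(E_m)·E_{n−k}`. -/
theorem stmt_3 {R : Type*} [Ring R]
    (χ : ℕ → R →+ R)
    (hχ0 : ∀ a, χ 0 a = a)
    (hLeib : ∀ n a b, χ n (a * b) = ∑ k ∈ Finset.range (n + 1), χ k a * χ (n - k) b)
    (hcomm : ∀ m n a, χ m (χ n a) = χ n (χ m a))
    (W V : R) (hWV : W * V = 1) (hVW : V * W = 1)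
    (E : ℕ → R) (hE : ∀ n, E n = χ n W * V) :
    ∀ m n, ∑ k ∈ Finset.range (m + 1), χ k (E n) * E (m - k)
         = ∑ k ∈ Finset.range (n + 1), χ k (E m) * E (n - k) := by
  have hEW : ∀ n, E n * W = χ n W := by
    intro n; rw [hE, mul_assoc, hVW, mul_one]
  have key : ∀ m n, ∑ k ∈ Finset.range (m + 1), χ k (E n) * E (m - k)
      = χ m (χ n W) * V := by
    intro m n
    rw [← hEW n, hLeib, Finset.sum_mul]
    refine Finset.sum_congr rfl fun k _ => ?_
    rw [mul_assoc, ← hE]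
  intro m n
  rw [key m n, key n m, hcomm]
end

section
/- Let W ∈ R be invertible, let D̃ ∈ R satisfy χ_n(D̃) = 0 for all n ≥ 1, and set L := W·D̃·W^{−1} and E_n := χ_n(W)·W^{−1}. Then for every n ≥ 0, Σ_{k=0}^{n} χ_k(L)·E_{n−k} = E_n·L; equivalently, χ_n(L) = [E_n, L] − Σ_{k=1}^{n−1} χ_k(L)·E_{n−k} for n ≥ 1. (Coefficient form of equations (2.25)–(2.26) of the paper.) -/
/-- Coefficient form of equations (2.25)–(2.26): with `L := W·D̃·W⁻¹`,
`E_n := χ_n(W)·W⁻¹`, and `χ_n(D̃) = 0` for `n ≥ 1`, one has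
`Σ_{k=0}^{n} χ_k(L)·E_{n−k} = E_n·L`, equivalently
`χ_n(L) = [E_n, L] − Σ_{k=1}^{n−1} χ_k(L)·E_{n−k}` for `n ≥ 1`. -/
theorem stmt_4 {R : Type*} [Ring R]
    (χ : ℕ → R →+ R)
    (hχ0 : ∀ a, χ 0 a = a)
    (hLeib : ∀ n a b, χ n (a * b) = ∑ k ∈ Finset.range (n + 1), χ k a * χ (n - k) b)
    (W V : R) (hWV : W * V = 1) (hVW : V * W = 1)
    (D : R) (hD : ∀ n, 1 ≤ n → χ n D = 0)
    (L : R) (hL : L = W * D * V)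
    (E : ℕ → R) (hE : ∀ n, E n = χ n W * V) :
    (∀ n, ∑ k ∈ Finset.range (n + 1), χ k L * E (n - k) = E n * L) ∧
    (∀ n, 1 ≤ n →
      χ n L = (E n * L - L * E n) - ∑ k ∈ Finset.Icc 1 (n - 1), χ k L * E (n - k)) := by
  have hE0 : E 0 = 1 := by rw [hE, hχ0, hWV]
  have key : ∀ n, ∑ k ∈ Finset.range (n + 1), χ k L * E (n - k) = E n * L := by
    intro n
    have h1 : ∑ k ∈ Finset.range (n + 1), χ k L * E (n - k)
        = (∑ k ∈ Finset.range (n + 1), χ k L * χ (n - k) W) * V := by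
      rw [Finset.sum_mul]
      exact Finset.sum_congr rfl fun k _ => by rw [hE, mul_assoc]
    have h2 : L * W = W * D := by rw [hL, mul_assoc, hVW, mul_one]
    have h3 : χ n (W * D) = χ n W * D := by
      rw [hLeib, Finset.sum_range_succ]
      have hz : ∑ k ∈ Finset.range n, χ k W * χ (n - k) D = 0 := by
        apply Finset.sum_eq_zero
        intro k hk
        rw [hD (n - k) (by simp at hk; omega), mul_zero]
      rw [hz, zero_add, Nat.sub_self, hχ0]
    have h4 : E n * L = χ n W * D * V := by
      rw [hE, hL, mul_assoc (χ n W) V, ← mul_assoc V (W * D) V,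
        ← mul_assoc V W D, hVW, one_mul, ← mul_assoc]
    rw [h1, ← hLeib, h2, h3, h4]
  refine ⟨key, fun n hn => ?_⟩
  have hset : Finset.range (n + 1) = insert 0 (insert n (Finset.Icc 1 (n - 1))) := by
    ext k
    simp [Finset.mem_range, Finset.mem_Icc]
    omega
  have hkey := key n
  rw [hset, Finset.sum_insert (by simp [Finset.mem_Icc]; omega),
    Finset.sum_insert (by simp [Finset.mem_Icc]; omega)] at hkey
  rw [hχ0, Nat.sub_zero, Nat.sub_self, hE0, mul_one] at hkey
  rw [← hkey]; abel
end

section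
/- Define ω_i := λ_i^{−1}·1 − u_0·Θ(φ) + T_i(φ)·Θ^{−1}(u_0) for i = 1, 2, where T_i := S_i^{−1}. Then the equation u_0·ϑ( ω_2 − ω_1 ) = T_2(ω_1)·ω_2 − T_1(ω_2)·ω_1 holds if and only if the generalized Fay identity holds: u_0·ϑ( (S_1(φ) − S_2(φ))·Θ^{−1}(u_0) ) = ( λ_1^{−1} − u_0·Θ(S_1(φ)) + φ·Θ^{−1}(u_0) )·( λ_2^{−1} − u_0·Θ(S_1S_2(φ)) + S_1(φ)·Θ^{−1}(u_0) ) − ( λ_2^{−1} − u_0·Θ(S_2(φ)) + φ·Θ^{−1}(u_0) )·( λ_1^{−1} − u_0·Θ(S_1S_2(φ)) + S_2(φ)·Θ^{−1}(u_0) ). (The second equation in the proof of Theorem 3.1 of the paper and its equivalence, after a Miwa shift, with equation (3.27).) -/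
/-- The second equation in the proof of Theorem 3.1 and its equivalence,
after a Miwa shift, with the generalized Fay identity (3.27).
Here `T_i := S_i⁻¹` and `ω_i := λ_i⁻¹·1 − u_0·Θ(φ) + T_i(φ)·Θ⁻¹(u_0)`. -/
theorem stmt_6 {k A : Type*} [CommRing k] [Ring A] [Algebra k A]
    (lam1 lam2 : kˣ)
    (Θ : A ≃ₐ[k] A) (ϑ : A →ₗ[k] A)
    (hϑ : ∀ a b, ϑ (a * b) = ϑ a * b + Θ a * ϑ b)
    (S1 S2 : A ≃ₐ[k] A)
    (hSS : ∀ a, S1 (S2 a) = S2 (S1 a))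
    (hS1Θ : ∀ a, S1 (Θ a) = Θ (S1 a))
    (hS2Θ : ∀ a, S2 (Θ a) = Θ (S2 a))
    (hS1ϑ : ∀ a, S1 (ϑ a) = ϑ (S1 a))
    (hS2ϑ : ∀ a, S2 (ϑ a) = ϑ (S2 a))
    (u0 φ : A) (hu1 : S1 u0 = u0) (hu2 : S2 u0 = u0)
    (ω1 ω2 : A)
    (hω1 : ω1 = algebraMap k A (↑lam1⁻¹ : k) - u0 * Θ φ + S1.symm φ * Θ.symm u0)
    (hω2 : ω2 = algebraMap k A (↑lam2⁻¹ : k) - u0 * Θ φ + S2.symm φ * Θ.symm u0) :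
    (u0 * ϑ (ω2 - ω1) = S2.symm ω1 * ω2 - S1.symm ω2 * ω1)
    ↔
    (u0 * ϑ ((S1 φ - S2 φ) * Θ.symm u0)
      = (algebraMap k A (↑lam1⁻¹ : k) - u0 * Θ (S1 φ) + φ * Θ.symm u0)
          * (algebraMap k A (↑lam2⁻¹ : k) - u0 * Θ (S1 (S2 φ)) + S1 φ * Θ.symm u0)
        - (algebraMap k A (↑lam2⁻¹ : k) - u0 * Θ (S2 φ) + φ * Θ.symm u0)
          * (algebraMap k A (↑lam1⁻¹ : k) - u0 * Θ (S1 (S2 φ)) + S2 φ * Θ.symm u0)) := by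
  subst hω1 hω2
  -- ϑ kills scalars
  have hϑ1 : ϑ 1 = 0 := by
    have h := hϑ 1 1
    simp only [mul_one, one_mul, map_one] at h
    have := h.symm
    rw [left_eq_add] at h
    exact h
  have hϑc : ∀ c : k, ϑ (algebraMap k A c) = 0 := fun c => by
    rw [Algebra.algebraMap_eq_smul_one, map_smul, hϑ1, smul_zero]
  -- commutation with symm's
  have hΘ1 : ∀ a, S1 (Θ.symm a) = Θ.symm (S1 a) := fun a =>
    Θ.injective (by rw [Θ.apply_symm_apply, ← hS1Θ, Θ.apply_symm_apply])
  have hΘ2 : ∀ a, S2 (Θ.symm a) = Θ.symm (S2 a) := fun a =>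
    Θ.injective (by rw [Θ.apply_symm_apply, ← hS2Θ, Θ.apply_symm_apply])
  have hS12 : ∀ a, S1 (S2.symm a) = S2.symm (S1 a) := fun a =>
    S2.injective (by rw [S2.apply_symm_apply, ← hSS, S2.apply_symm_apply])
  have key : ∀ x y : A, x = y ↔ S2 (S1 x) = S2 (S1 y) := fun x y =>
    ⟨fun h => by rw [h], fun h => S1.injective (S2.injective h)⟩
  have E1 : S2 (S1 (u0 * ϑ ((algebraMap k A (↑lam2⁻¹ : k) - u0 * Θ φ + S2.symm φ * Θ.symm u0)
      - (algebraMap k A (↑lam1⁻¹ : k) - u0 * Θ φ + S1.symm φ * Θ.symm u0))))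
      = u0 * ϑ ((S1 φ - S2 φ) * Θ.symm u0) := by
    simp only [map_mul, map_sub, map_add, hu1, hu2, hS1ϑ, hS2ϑ, hS1Θ, hS2Θ, hΘ1, hΘ2,
      hS12, AlgEquiv.apply_symm_apply, AlgEquiv.commutes, hϑc, sub_mul, hSS]
    noncomm_ring
  have E2 : S2 (S1 ((S2.symm (algebraMap k A (↑lam1⁻¹ : k) - u0 * Θ φ + S1.symm φ * Θ.symm u0))
        * (algebraMap k A (↑lam2⁻¹ : k) - u0 * Θ φ + S2.symm φ * Θ.symm u0)
      - (S1.symm (algebraMap k A (↑lam2⁻¹ : k) - u0 * Θ φ + S2.symm φ * Θ.symm u0))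
        * (algebraMap k A (↑lam1⁻¹ : k) - u0 * Θ φ + S1.symm φ * Θ.symm u0)))
      = (algebraMap k A (↑lam1⁻¹ : k) - u0 * Θ (S1 φ) + φ * Θ.symm u0)
          * (algebraMap k A (↑lam2⁻¹ : k) - u0 * Θ (S1 (S2 φ)) + S1 φ * Θ.symm u0)
        - (algebraMap k A (↑lam2⁻¹ : k) - u0 * Θ (S2 φ) + φ * Θ.symm u0)
          * (algebraMap k A (↑lam1⁻¹ : k) - u0 * Θ (S1 (S2 φ)) + S2 φ * Θ.symm u0) := by
    simp only [map_mul, map_sub, map_add, hu1, hu2, hS1Θ, hS2Θ, hΘ1, hΘ2, hS12,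
      AlgEquiv.apply_symm_apply, AlgEquiv.commutes, hSS]
  rw [key, E1, E2]
end

section
/- Suppose that for each of the three pairs (i, j) ∈ {(1,2), (2,3), (3,1)} the noncommutative differential Fay identity holds: d( λ_i^{−1} − λ_j^{−1} + S_j(φ) − S_i(φ) ) = ( λ_i^{−1} − λ_j^{−1} + S_j(φ) − S_i(φ) )·( S_iS_j(φ) − S_i(φ) − S_j(φ) + φ ) − [ S_i(φ) − φ, S_j(φ) − φ ]. Then the noncommutative algebraic Fay identity holds: Σ_{i,j,k=1}^{3} ε_{ijk} · S_k( λ_i^{−1}·(S_i(φ) − φ) + φ·S_i(φ) ) = 0, where ε_{ijk} is totally antisymmetric with ε_{123} = 1. (Theorem 3.2 of the paper, forward direction.) -/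
/-- Theorem 3.2 (forward direction): the noncommutative differential Fay
identities for the pairs (1,2), (2,3), (3,1) imply the noncommutative
algebraic Fay identity. -/
theorem stmt_8 {k A : Type*} [CommRing k] [Ring A] [Algebra k A]
    (lam1 lam2 lam3 : kˣ)
    (d : A →ₗ[k] A)
    (hd : ∀ a b, d (a * b) = d a * b + a * d b)
    (S1 S2 S3 : A →ₐ[k] A)
    (h12 : ∀ a, S1 (S2 a) = S2 (S1 a))
    (h23 : ∀ a, S2 (S3 a) = S3 (S2 a))
    (h31 : ∀ a, S3 (S1 a) = S1 (S3 a))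
    (φ : A)
    (hFay12 : d (algebraMap k A (↑lam1⁻¹ : k) - algebraMap k A (↑lam2⁻¹ : k)
        + S2 φ - S1 φ) =
      (algebraMap k A (↑lam1⁻¹ : k) - algebraMap k A (↑lam2⁻¹ : k) + S2 φ - S1 φ)
          * (S1 (S2 φ) - S1 φ - S2 φ + φ)
        - ((S1 φ - φ) * (S2 φ - φ) - (S2 φ - φ) * (S1 φ - φ)))
    (hFay23 : d (algebraMap k A (↑lam2⁻¹ : k) - algebraMap k A (↑lam3⁻¹ : k)
        + S3 φ - S2 φ) =
      (algebraMap k A (↑lam2⁻¹ : k) - algebraMap k A (↑lam3⁻¹ : k) + S3 φ - S2 φ)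
          * (S2 (S3 φ) - S2 φ - S3 φ + φ)
        - ((S2 φ - φ) * (S3 φ - φ) - (S3 φ - φ) * (S2 φ - φ)))
    (hFay31 : d (algebraMap k A (↑lam3⁻¹ : k) - algebraMap k A (↑lam1⁻¹ : k)
        + S1 φ - S3 φ) =
      (algebraMap k A (↑lam3⁻¹ : k) - algebraMap k A (↑lam1⁻¹ : k) + S1 φ - S3 φ)
          * (S3 (S1 φ) - S3 φ - S1 φ + φ)
        - ((S3 φ - φ) * (S1 φ - φ) - (S1 φ - φ) * (S3 φ - φ))) :
    S3 (algebraMap k A (↑lam1⁻¹ : k) * (S1 φ - φ) + φ * S1 φ)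
      + S1 (algebraMap k A (↑lam2⁻¹ : k) * (S2 φ - φ) + φ * S2 φ)
      + S2 (algebraMap k A (↑lam3⁻¹ : k) * (S3 φ - φ) + φ * S3 φ)
      - S2 (algebraMap k A (↑lam1⁻¹ : k) * (S1 φ - φ) + φ * S1 φ)
      - S1 (algebraMap k A (↑lam3⁻¹ : k) * (S3 φ - φ) + φ * S3 φ)
      - S3 (algebraMap k A (↑lam2⁻¹ : k) * (S2 φ - φ) + φ * S2 φ) = 0 := by

  have hzero : (algebraMap k A (↑lam1⁻¹ : k) - algebraMap k A (↑lam2⁻¹ : k) + S2 φ - S1 φ)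
      + (algebraMap k A (↑lam2⁻¹ : k) - algebraMap k A (↑lam3⁻¹ : k) + S3 φ - S2 φ)
      + (algebraMap k A (↑lam3⁻¹ : k) - algebraMap k A (↑lam1⁻¹ : k) + S1 φ - S3 φ) = 0 := by
    abel
  have hd0 : d (algebraMap k A (↑lam1⁻¹ : k) - algebraMap k A (↑lam2⁻¹ : k) + S2 φ - S1 φ)
      + d (algebraMap k A (↑lam2⁻¹ : k) - algebraMap k A (↑lam3⁻¹ : k) + S3 φ - S2 φ)
      + d (algebraMap k A (↑lam3⁻¹ : k) - algebraMap k A (↑lam1⁻¹ : k) + S1 φ - S3 φ) = 0 := by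
    rw [← map_add, ← map_add, hzero, map_zero]
  rw [hFay12, hFay23, hFay31] at hd0
  simp only [map_add, map_mul, map_sub, AlgHom.commutes, h12, h23, h31] at hd0 ⊢
  linear_combination (norm := noncomm_ring) -hd0
end

section
/- Let f ∈ R be invertible and φ ∈ R, and suppose the linear system χ_{m+1}(f) = − f·χ_m(φ) holds for all m ≥ 1. Then φ satisfies the potential KP hierarchy in the form χ_{n+1}(χ_m(φ)) − χ_{m+1}(χ_n(φ)) = Σ_{k=1}^{n} χ_k(φ)·χ_{n−k}(χ_m(φ)) − Σ_{k=1}^{m} χ_k(φ)·χ_{m−k}(χ_n(φ)) for all m, n ≥ 1. (The remark following Theorem 3.2 of the paper: equations (3.32) as integrability conditions of the linear system (3.35).) -/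
/-- Remark after Theorem 3.2: the KP hierarchy equations (3.32) are the
integrability conditions of the linear system `χ_{m+1}(f) = − f·χ_m(φ)`. -/
theorem stmt_9 {R : Type*} [Ring R]
    (χ : ℕ → R →+ R)
    (hχ0 : ∀ a, χ 0 a = a)
    (hLeib : ∀ n a b, χ n (a * b) = ∑ k ∈ Finset.range (n + 1), χ k a * χ (n - k) b)
    (hcomm : ∀ m n a, χ m (χ n a) = χ n (χ m a))
    (f g : R) (hfg : f * g = 1) (hgf : g * f = 1)
    (φ : R)
    (hlin : ∀ m, 1 ≤ m → χ (m + 1) f = -(f * χ m φ)) :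
    ∀ m n, 1 ≤ m → 1 ≤ n →
      χ (n + 1) (χ m φ) - χ (m + 1) (χ n φ)
        = ∑ k ∈ Finset.Icc 1 n, χ k φ * χ (n - k) (χ m φ)
          - ∑ k ∈ Finset.Icc 1 m, χ k φ * χ (m - k) (χ n φ) := by
  have key : ∀ p q : ℕ, 1 ≤ p → 1 ≤ q →
      χ (q + 1) (χ (p + 1) f)
        = f * ((∑ k ∈ Finset.Icc 1 q, χ k φ * χ (q - k) (χ p φ)) - χ (q + 1) (χ p φ))
          - χ 1 f * χ q (χ p φ) := by
    intro p q hp hq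
    have hIcc : ∑ k ∈ Finset.Icc 1 q, χ k φ * χ (q - k) (χ p φ)
        = ∑ k ∈ Finset.range q, χ (k + 1) φ * χ (q - (k + 1)) (χ p φ) := by
      rw [← Finset.Ico_add_one_right_eq_Icc, Finset.sum_Ico_eq_sum_range]
      simp [add_comm]
    rw [hlin p hp, map_neg, hLeib, Finset.sum_range_succ', Finset.sum_range_succ', hIcc]
    have hstep : ∀ k ∈ Finset.range q, χ (k + 1 + 1) f * χ (q + 1 - (k + 1 + 1)) (χ p φ)
        = -(f * (χ (k + 1) φ * χ (q - (k + 1)) (χ p φ))) := by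
      intro k _
      rw [hlin (k + 1) (by omega)]
      have h1 : q + 1 - (k + 1 + 1) = q - (k + 1) := by omega
      rw [h1, neg_mul, mul_assoc]
    rw [Finset.sum_congr rfl hstep, Finset.sum_neg_distrib, mul_sub, Finset.mul_sum]
    simp only [hχ0, Nat.add_sub_cancel, Nat.sub_zero]
    abel
  intro m n hm hn
  have E : f * ((∑ k ∈ Finset.Icc 1 n, χ k φ * χ (n - k) (χ m φ)) - χ (n + 1) (χ m φ))
      - χ 1 f * χ n (χ m φ)
      = f * ((∑ k ∈ Finset.Icc 1 m, χ k φ * χ (m - k) (χ n φ)) - χ (m + 1) (χ n φ))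
      - χ 1 f * χ m (χ n φ) := by
    rw [← key m n hm hn, ← key n m hn hm, hcomm]
  rw [hcomm n m] at E
  have E2 : f * ((∑ k ∈ Finset.Icc 1 n, χ k φ * χ (n - k) (χ m φ)) - χ (n + 1) (χ m φ))
      = f * ((∑ k ∈ Finset.Icc 1 m, χ k φ * χ (m - k) (χ n φ)) - χ (m + 1) (χ n φ)) :=
    sub_left_inj.mp E
  have E3 : (∑ k ∈ Finset.Icc 1 n, χ k φ * χ (n - k) (χ m φ)) - χ (n + 1) (χ m φ)
      = (∑ k ∈ Finset.Icc 1 m, χ k φ * χ (m - k) (χ n φ)) - χ (m + 1) (χ n φ) := by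
    have := congrArg (g * ·) E2
    simpa [← mul_assoc, hgf] using this
  rw [sub_eq_sub_iff_sub_eq_sub] at E3
  exact E3.symm
end

section
/- Set χ_1 := ∂_x, χ_2 := (1/2)(∂_y + ∂_x²), χ_3 := (1/3)∂_t + (1/2)∂_x∂_y + (1/6)∂_x³. Then for φ ∈ A the equation χ_3(χ_1(φ)) − χ_2(χ_2(φ)) = χ_1(φ)·χ_1(χ_1(φ)) + χ_2(φ)·χ_1(φ) − χ_1(φ)·χ_2(φ) holds if and only if φ satisfies the noncommutative potential KP equation (1/3)·∂_t∂_x(φ) − (1/12)·∂_x⁴(φ) − (1/4)·∂_y²(φ) = (1/2)·∂_x( ∂_x(φ)·∂_x(φ) ) − (1/2)·[ ∂_x(φ), ∂_y(φ) ]. (The identification, in section 3.3 of the paper, of the (m,n) = (1,2) member of the hierarchy (3.32) with the potential KP equation.) -/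
/-- Section 3.3: the (m,n) = (1,2) member of the hierarchy (3.32), with
`χ_1 = ∂_x`, `χ_2 = (∂_y + ∂_x²)/2`, `χ_3 = ∂_t/3 + ∂_x∂_y/2 + ∂_x³/6`,
is the noncommutative potential KP equation. -/
theorem stmt_10 {A : Type*} [Ring A] [Algebra ℚ A]
    (dx dy dt : A →ₗ[ℚ] A)
    (hdx : ∀ a b, dx (a * b) = dx a * b + a * dx b)
    (hdy : ∀ a b, dy (a * b) = dy a * b + a * dy b)
    (hdt : ∀ a b, dt (a * b) = dt a * b + a * dt b)
    (hxy : ∀ a, dx (dy a) = dy (dx a))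
    (hxt : ∀ a, dx (dt a) = dt (dx a))
    (hyt : ∀ a, dy (dt a) = dt (dy a))
    (χ1 χ2 χ3 : A → A)
    (hχ1 : ∀ a, χ1 a = dx a)
    (hχ2 : ∀ a, χ2 a = (2⁻¹ : ℚ) • (dy a + dx (dx a)))
    (hχ3 : ∀ a, χ3 a = (3⁻¹ : ℚ) • dt a + (2⁻¹ : ℚ) • dx (dy a)
                        + (6⁻¹ : ℚ) • dx (dx (dx a)))
    (φ : A) :
    (χ3 (χ1 φ) - χ2 (χ2 φ)
        = χ1 φ * χ1 (χ1 φ) + χ2 φ * χ1 φ - χ1 φ * χ2 φ)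
    ↔
    ((3⁻¹ : ℚ) • dt (dx φ) - (12⁻¹ : ℚ) • dx (dx (dx (dx φ)))
        - (4⁻¹ : ℚ) • dy (dy φ)
      = (2⁻¹ : ℚ) • dx (dx φ * dx φ)
        - (2⁻¹ : ℚ) • (dx φ * dy φ - dy φ * dx φ)) := by
  have e1 : χ3 (χ1 φ) - χ2 (χ2 φ)
      = (3⁻¹ : ℚ) • dt (dx φ) - (12⁻¹ : ℚ) • dx (dx (dx (dx φ)))
        - (4⁻¹ : ℚ) • dy (dy φ) := by
    simp only [hχ1, hχ2, hχ3, map_add, map_smul, hxy]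
    module
  have e2 : χ1 φ * χ1 (χ1 φ) + χ2 φ * χ1 φ - χ1 φ * χ2 φ
      = (2⁻¹ : ℚ) • dx (dx φ * dx φ)
        - (2⁻¹ : ℚ) • (dx φ * dy φ - dy φ * dx φ) := by
    simp only [hχ1, hχ2, hdx, smul_mul_assoc, mul_smul_comm, add_mul, mul_add,
      smul_add, smul_sub]
    module
  rw [e1, e2]
end

section
/- Let u_0 be the 2×2 matrix with (1,1) entry 1 and all other entries 0, and let Φ be the 2×2 matrix with rows (p, q) and (−r, p′). Write Φ_1, Φ_2, Φ_12 for the matrices obtained by applying S_1, S_2, S_1∘S_2 entrywise to Φ, and write x_i := S_i(x), x_{12} := S_1(S_2(x)) for x ∈ {p, q, r}. Then the matrix equation ( λ_2^{−1}·1 − u_0·Φ_2 + Φ·u_0 )·( λ_1^{−1}·1 − u_0·Φ_12 + Φ_2·u_0 ) = ( λ_1^{−1}·1 − u_0·Φ_1 + Φ·u_0 )·( λ_2^{−1}·1 − u_0·Φ_12 + Φ_1·u_0 ) holds if and only if the following three equations hold: (i) 0 = ( λ_1^{−1} − λ_2^{−1} + p_2 − p_1 )·( p_{12} − p_1 − p_2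 + p ) + q_2·r_2 − q_1·r_1 − [ p_1 − p, p_2 − p ]; (ii) 0 = ( λ_1^{−1} − λ_2^{−1} + p_2 − p_1 )·q_{12} + λ_2^{−1}·q_1 − λ_1^{−1}·q_2; (iii) 0 = λ_1^{−1}·( r_1 − r ) − λ_2^{−1}·( r_2 − r ) + r·( p_1 − p_2 ). In particular p′ remains undetermined. (Equations (3.49)–(3.51) of the paper as the content of the AKNS reduction (3.47)–(3.48).) -/
/-- Equations (3.49)–(3.51): the content of the AKNS reduction (3.47)–(3.48).
The 2×2 matrix functional equation is equivalent to the three scalar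
equations (i)–(iii); the entry `p′` remains undetermined. -/
theorem stmt_11 {k A : Type*} [CommRing k] [Ring A] [Algebra k A]
    (lam1 lam2 : kˣ)
    (S1 S2 : A →ₐ[k] A)
    (hSS : ∀ a, S1 (S2 a) = S2 (S1 a))
    (p q r p' : A)
    (l1 l2 : A)
    (hl1 : l1 = algebraMap k A (↑lam1⁻¹ : k))
    (hl2 : l2 = algebraMap k A (↑lam2⁻¹ : k))
    (u0 Φ Φ1 Φ2 Φ12 : Matrix (Fin 2) (Fin 2) A)
    (hu0 : u0 = !![1, 0; 0, 0])
    (hΦ : Φ = !![p, q; -r, p'])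
    (hΦ1 : Φ1 = Φ.map S1)
    (hΦ2 : Φ2 = Φ.map S2)
    (hΦ12 : Φ12 = Φ.map fun a => S1 (S2 a)) :
    ((l2 • (1 : Matrix (Fin 2) (Fin 2) A) - u0 * Φ2 + Φ * u0)
        * (l1 • (1 : Matrix (Fin 2) (Fin 2) A) - u0 * Φ12 + Φ2 * u0)
      = (l1 • (1 : Matrix (Fin 2) (Fin 2) A) - u0 * Φ1 + Φ * u0)
        * (l2 • (1 : Matrix (Fin 2) (Fin 2) A) - u0 * Φ12 + Φ1 * u0))
    ↔
    ((0 = (l1 - l2 + S2 p - S1 p) * (S1 (S2 p) - S1 p - S2 p + p)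
          + S2 q * S2 r - S1 q * S1 r
          - ((S1 p - p) * (S2 p - p) - (S2 p - p) * (S1 p - p)))
      ∧ (0 = (l1 - l2 + S2 p - S1 p) * S1 (S2 q) + l2 * S1 q - l1 * S2 q)
      ∧ (0 = l1 * (S1 r - r) - l2 * (S2 r - r) + r * (S1 p - S2 p))) := by

  have hc1 : ∀ x : A, l1 * x = x * l1 := by
    intro x; rw [hl1]; exact Algebra.commutes _ x
  have hc2 : ∀ x : A, l2 * x = x * l2 := by
    intro x; rw [hl2]; exact Algebra.commutes _ x
  subst hu0 hΦ hΦ1 hΦ2 hΦ12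
  rw [← Matrix.ext_iff]
  simp only [Fin.forall_fin_two, Matrix.mul_apply, Fin.sum_univ_two,
    Matrix.smul_apply, Matrix.sub_apply, Matrix.add_apply, Matrix.map_apply,
    Matrix.one_apply_eq, Matrix.one_apply_ne, Matrix.cons_val', Matrix.cons_val_zero,
    Matrix.cons_val_one, Matrix.head_cons, Matrix.head_fin_const, Matrix.empty_val',
    Matrix.cons_val_fin_one, Matrix.of_apply, smul_eq_mul, map_neg, mul_one, mul_zero, one_mul, zero_mul, add_zero, zero_add, sub_zero, neg_mul, mul_neg, neg_neg,
    Fin.zero_eq_one_iff, Fin.one_eq_zero_iff, ne_eq, OfNat.ofNat_ne_one,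
    not_false_eq_true, Ne, one_ne_zero, zero_ne_one]
  constructor
  · rintro ⟨⟨h00, h01⟩, h10, h11⟩
    refine ⟨?_, ?_, ?_⟩
    · linear_combination (norm := noncomm_ring) -h00 - hc1 p + hc1 (S2 p) - hc1 l2 + hc2 p - hc2 (S1 p)
    · linear_combination (norm := noncomm_ring) -h01 - hc2 (S1 q) + hc1 (S2 q)
    · linear_combination (norm := noncomm_ring) -h10 - hc2 r + hc1 r
  · rintro ⟨h1, h2, h3⟩
    refine ⟨⟨?_, ?_⟩, ?_, ?_⟩
    · linear_combination (norm := noncomm_ring) -h1 - hc1 p + hc1 (S2 p) - hc1 l2 + hc2 p - hc2 (S1 p)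
    · linear_combination (norm := noncomm_ring) -h2 - hc2 (S1 q) + hc1 (S2 q)
    · linear_combination (norm := noncomm_ring) -h3 - hc2 r + hc1 r
    · linear_combination (norm := noncomm_ring) -hc1 l2
end

section
/- Suppose p, q, r ∈ A satisfy (i) d(S(p) − p) = q·r − S(q)·S(r), (ii) S(q) − q = λ·d(S(q)) + λ·(S(p) − p)·S(q), and (iii) S(r) − r = λ·d(r) − λ·r·(S(p) − p). Then d( S(p) − p + λ·S(q)·r ) = [ S(p) − p + λ·S(q)·r , S(p) − p ]. (The commutator equation (3.58) of the paper derived from the AKNS system (3.52)–(3.54).) -/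
/-- Equation (3.58): derived from the AKNS system (3.52)–(3.54). -/
theorem stmt_12 {k A : Type*} [CommRing k] [Ring A] [Algebra k A]
    (lam : k)
    (d : A →ₗ[k] A)
    (hd : ∀ a b, d (a * b) = d a * b + a * d b)
    (S : A →ₐ[k] A)
    (p q r : A)
    (h1 : d (S p - p) = q * r - S q * S r)
    (h2 : S q - q = lam • d (S q) + lam • ((S p - p) * S q))
    (h3 : S r - r = lam • d r - lam • (r * (S p - p))) :
    d (S p - p + lam • (S q * r))
      = (S p - p + lam • (S q * r)) * (S p - p)
        - (S p - p) * (S p - p + lam • (S q * r)) := by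
  have e2 : lam • d (S q) = S q - q - lam • ((S p - p) * S q) := by
    rw [h2]; abel
  have e3 : lam • d r = S r - r + lam • (r * (S p - p)) := by
    rw [h3]; abel
  rw [map_add, map_smul, hd, h1, smul_add, ← smul_mul_assoc, e2,
    (mul_smul_comm lam (S q) (d r)).symm, e3]
  simp only [sub_mul, mul_sub, mul_add, add_mul, smul_sub, smul_add, smul_mul_assoc, mul_smul_comm, mul_assoc]
  abel
end

section
/- Suppose p, q, r ∈ A satisfy S(q) − q = λ·d(S(q)) + λ·(S(p) − p)·S(q), S(r) − r = λ·d(r) − λ·r·(S(p) − p), and S(p) − p = − λ·S(q)·r. Then the functional representation of the AKNS hierarchy holds: S^{−1}(q) − q + λ·d(q) = λ²·q·S^{−1}(r)·q and S(r) − r − λ·d(r) = λ²·r·S(q)·r. (The derivation of equations (3.60) of the paper from (3.53), (3.54) and (3.59).) -/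
/-- The derivation of the functional representation (3.60) of the AKNS
hierarchy from (3.53), (3.54) and (3.59). -/
theorem stmt_13 {k A : Type*} [CommRing k] [Ring A] [Algebra k A]
    (lam : k)
    (d : A →ₗ[k] A)
    (hd : ∀ a b, d (a * b) = d a * b + a * d b)
    (S : A ≃ₐ[k] A)
    (hSd : ∀ a, S (d a) = d (S a))
    (p q r : A)
    (h2 : S q - q = lam • d (S q) + lam • ((S p - p) * S q))
    (h3 : S r - r = lam • d r - lam • (r * (S p - p)))
    (h4 : S p - p = -(lam • (S q * r))) :
    (S.symm q - q + lam • d q = (lam ^ 2) • (q * S.symm r * q))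
    ∧ (S r - r - lam • d r = (lam ^ 2) • (r * S q * r)) := by
  have hSd' : ∀ a, S.symm (d a) = d (S.symm a) := by
    intro a
    have := hSd (S.symm a)
    rw [S.apply_symm_apply] at this
    calc S.symm (d a) = S.symm (S (d (S.symm a))) := by rw [this]
      _ = d (S.symm a) := S.symm_apply_apply _
  constructor
  · have h2' : S q - q = lam • d (S q) - (lam ^ 2) • (S q * r * S q) := by
      rw [h4] at h2
      rw [h2]
      rw [neg_mul, smul_mul_assoc, smul_neg, smul_smul, mul_assoc, ← sub_eq_add_neg]
      module
    have key := congrArg S.symm h2'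
    simp only [map_sub, map_smul, map_mul, hSd', S.symm_apply_apply] at key
    linear_combination (norm := module) -key
  · rw [h3, h4]
    rw [mul_neg, smul_neg, sub_neg_eq_add, mul_smul_comm, smul_smul, mul_assoc]
    module
end

section
/- Suppose q, r ∈ A satisfy the functional AKNS equations S^{−1}(q) − q + λ·d(q) = λ²·q·S^{−1}(r)·q and S(r) − r − λ·d(r) = λ²·r·S(q)·r. Then S(q)·S(r) − q·r = λ·d( S(q)·r ). (Equation (3.62) of the paper, verified in the first remark of section 3.3.3.) -/
/-- Equation (3.62), verified in the first remark of section 3.3.3: the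
functional AKNS equations imply `S(q)·S(r) − q·r = λ·d(S(q)·r)`. -/
theorem stmt_14 {k A : Type*} [CommRing k] [Ring A] [Algebra k A]
    (lam : k)
    (d : A →ₗ[k] A)
    (hd : ∀ a b, d (a * b) = d a * b + a * d b)
    (S : A ≃ₐ[k] A)
    (hSd : ∀ a, S (d a) = d (S a))
    (q r : A)
    (hq : S.symm q - q + lam • d q = (lam ^ 2) • (q * S.symm r * q))
    (hr : S r - r - lam • d r = (lam ^ 2) • (r * S q * r)) :
    S q * S r - q * r = lam • d (S q * r) := by
  have e1 : q - S q + lam • d (S q) = (lam ^ 2) • (S q * r * S q) := by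
    have := congrArg S hq
    simpa [map_sub, map_add, map_smul, map_mul, hSd] using this
  have h1 : (q - S q + lam • d (S q)) * r = ((lam ^ 2) • (S q * r * S q)) * r := by
    rw [e1]
  have h2 : S q * (S r - r - lam • d r) = S q * ((lam ^ 2) • (r * S q * r)) := by
    rw [hr]
  simp only [sub_mul, add_mul, mul_sub, mul_add, smul_mul_assoc, mul_smul_comm,
    mul_assoc] at h1 h2
  have h3 := h2.trans h1.symm
  rw [hd, smul_add]
  linear_combination (norm := abel) h3
end

section
/- Let f ∈ A be invertible and set ω_i := T_i(f)·f^{−1} for i = 1, 2, and S_i := T_i^{−1}. Then the equation λ_2^{−1}·( ω_1 − T_2(ω_1) ) − λ_1^{−1}·( ω_2 − T_1(ω_2) ) = T_1(ω_2)·d(ω_1) − T_2(ω_1)·d(ω_2) holds if and only if the noncommutative differential Fay identity of the mKP hierarchy holds: λ_2^{−1}·( S_1( f^{−1}·S_2(f) ) − f^{−1}·S_2(f) ) − λ_1^{−1}·( S_2( f^{−1}·S_1(f) ) − f^{−1}·S_1(f) ) = S_1( f^{−1}·d(f) ) − S_2( f^{−1}·d(f) ). (The passage from equation (4.9) with (4.10)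 to equation (4.14) of the paper.) -/
/-- The passage from equation (4.9) with (4.10) to the noncommutative
differential Fay identity (4.14) of the mKP hierarchy.
Here `ω_i := T_i(f)·f⁻¹` and `S_i := T_i⁻¹`. -/
theorem stmt_15 {k A : Type*} [CommRing k] [Ring A] [Algebra k A]
    (lam1 lam2 : kˣ)
    (d : A →ₗ[k] A)
    (hd : ∀ a b, d (a * b) = d a * b + a * d b)
    (T1 T2 : A ≃ₐ[k] A)
    (hTT : ∀ a, T1 (T2 a) = T2 (T1 a))
    (hT1d : ∀ a, T1 (d a) = d (T1 a))
    (hT2d : ∀ a, T2 (d a) = d (T2 a))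
    (f g : A) (hfg : f * g = 1) (hgf : g * f = 1)
    (ω1 ω2 : A)
    (hω1 : ω1 = T1 f * g)
    (hω2 : ω2 = T2 f * g) :
    ((↑lam2⁻¹ : k) • (ω1 - T2 ω1) - (↑lam1⁻¹ : k) • (ω2 - T1 ω2)
        = T1 ω2 * d ω1 - T2 ω1 * d ω2)
    ↔
    ((↑lam2⁻¹ : k) • (T1.symm (g * T2.symm f) - g * T2.symm f)
        - (↑lam1⁻¹ : k) • (T2.symm (g * T1.symm f) - g * T1.symm f)
      = T1.symm (g * d f) - T2.symm (g * d f)) := by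
  -- basic cancellation lemmas
  have c1 : ∀ x : A, g * (f * x) = x := fun x => by rw [← mul_assoc, hgf, one_mul]
  have c2 : ∀ x : A, f * (g * x) = x := fun x => by rw [← mul_assoc, hfg, one_mul]
  have hTT2 : ∀ a, T2 (T1 a) = T1 (T2 a) := fun a => (hTT a).symm
  have hS2T1 : ∀ a, T2.symm (T1 a) = T1 (T2.symm a) := fun a =>
    T2.injective (by rw [AlgEquiv.apply_symm_apply, ← hTT, AlgEquiv.apply_symm_apply])
  have hS1T2 : ∀ a, T1.symm (T2 a) = T2 (T1.symm a) := fun a =>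
    T1.injective (by rw [AlgEquiv.apply_symm_apply, hTT, AlgEquiv.apply_symm_apply])
  -- image cancellations
  have e1gf : T1 g * T1 f = 1 := by rw [← map_mul, hgf, map_one]
  have e1fg : T1 f * T1 g = 1 := by rw [← map_mul, hfg, map_one]
  have e2gf : T2 g * T2 f = 1 := by rw [← map_mul, hgf, map_one]
  have e2fg : T2 f * T2 g = 1 := by rw [← map_mul, hfg, map_one]
  have e12gf : T1 (T2 g) * T1 (T2 f) = 1 := by rw [← map_mul, e2gf, map_one]
  have e12fg : T1 (T2 f) * T1 (T2 g) = 1 := by rw [← map_mul, e2fg, map_one]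
  have c3 : ∀ x : A, T1 g * (T1 f * x) = x := fun x => by rw [← mul_assoc, e1gf, one_mul]
  have c4 : ∀ x : A, T1 f * (T1 g * x) = x := fun x => by rw [← mul_assoc, e1fg, one_mul]
  have c5 : ∀ x : A, T2 g * (T2 f * x) = x := fun x => by rw [← mul_assoc, e2gf, one_mul]
  have c6 : ∀ x : A, T2 f * (T2 g * x) = x := fun x => by rw [← mul_assoc, e2fg, one_mul]
  have c7 : ∀ x : A, T1 (T2 g) * (T1 (T2 f) * x) = x := fun x => by
    rw [← mul_assoc, e12gf, one_mul]
  have c8 : ∀ x : A, T1 (T2 f) * (T1 (T2 g) * x) = x := fun x => by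
    rw [← mul_assoc, e12fg, one_mul]
  -- derivation facts
  have hd1 : d (1 : A) = 0 := by
    have h := hd 1 1
    simpa using h.symm
  -- derivation facts
  have hd1 : d (1 : A) = 0 := by
    have h := hd 1 1
    simpa using h.symm
  have hdgf : d g * f = -(g * d f) := by
    have h := hd g f
    rw [hgf, hd1] at h
    exact eq_neg_of_add_eq_zero_left h.symm
  have hdg : d g = -(g * (d f * g)) := by
    calc d g = d g * (f * g) := by rw [hfg, mul_one]
    _ = (d g * f) * g := by rw [mul_assoc]
    _ = -(g * d f) * g := by rw [hdgf]
    _ = -(g * (d f * g)) := by rw [neg_mul, mul_assoc]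
  have hdω1 : d ω1 = T1 (d f) * g - T1 f * (g * (d f * g)) := by
    rw [hω1, hd, hdg, hT1d, mul_neg, sub_eq_add_neg]
  have hdω2 : d ω2 = T2 (d f) * g - T2 f * (g * (d f * g)) := by
    rw [hω2, hd, hdg, hT2d, mul_neg, sub_eq_add_neg]
  have hSS : ∀ a, T2.symm (T1.symm a) = T1.symm (T2.symm a) := fun a => by
    apply T2.injective
    rw [AlgEquiv.apply_symm_apply]
    have h := hS1T2 (T2.symm a)
    rw [AlgEquiv.apply_symm_apply] at h
    exact h
  -- the injective transformation
  have hinj : ∀ x y : A,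
      T1.symm (T2.symm (T1 (T2 g) * x * f)) = T1.symm (T2.symm (T1 (T2 g) * y * f)) →
      x = y := by
    intro x y h
    have h1 := congrArg T2 (congrArg T1 h)
    simp only [AlgEquiv.apply_symm_apply, hTT2] at h1
    have h2 := congrArg (fun z => T1 (T2 f) * z * g) h1
    simpa only [mul_assoc, c8, hfg, mul_one] using h2
  -- image of the LHS of (4.9)
  have ΦL : T1.symm (T2.symm (T1 (T2 g) *
        ((↑lam2⁻¹ : k) • (ω1 - T2 ω1) - (↑lam1⁻¹ : k) • (ω2 - T1 ω2)) * f))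
      = -((↑lam2⁻¹ : k) • (T1.symm (g * T2.symm f) - g * T2.symm f)
          - (↑lam1⁻¹ : k) • (T2.symm (g * T1.symm f) - g * T1.symm f)) := by
    simp only [hω1, hω2, map_mul, map_sub, map_smul, mul_sub, sub_mul, smul_sub,
      mul_smul_comm, smul_mul_assoc, mul_assoc, hTT2, c1, c2, c3, c4, c5, c6, c7, c8,
      hgf, hfg, mul_one, one_mul, hS2T1, hS1T2, hSS, AlgEquiv.symm_apply_apply]
    abel
  -- image of the RHS of (4.9)
  have ΦR : T1.symm (T2.symm (T1 (T2 g) * (T1 ω2 * d ω1 - T2 ω1 * d ω2) * f))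
      = -(T1.symm (g * d f) - T2.symm (g * d f)) := by
    rw [hdω1, hdω2]
    simp only [hω1, hω2, map_mul, map_sub, map_smul, mul_sub, sub_mul,
      mul_assoc, hTT2, c1, c2, c3, c4, c5, c6, c7, c8,
      hgf, hfg, mul_one, one_mul, hS2T1, hS1T2, hSS, AlgEquiv.symm_apply_apply]
    abel
  constructor
  · intro h
    have := ΦL.symm.trans ((congrArg (fun z => T1.symm (T2.symm (T1 (T2 g) * z * f))) h).trans ΦR)
    exact neg_inj.mp this
  · intro h
    apply hinj
    rw [ΦL, ΦR, h]
end

section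
/- Let f ∈ A be invertible and suppose that for each of the three pairs (i, j) ∈ {(1,2), (2,3), (3,1)} the mKP differential Fay identity holds: λ_j^{−1}·( S_i( f^{−1}·S_j(f) ) − f^{−1}·S_j(f) ) − λ_i^{−1}·( S_j( f^{−1}·S_i(f) ) − f^{−1}·S_i(f) ) = S_i( f^{−1}·d(f) ) − S_j( f^{−1}·d(f) ). Then the mKP algebraic Fay identity holds: λ_1^{−1}·( S_3( f^{−1}·S_1(f) ) − S_2( f^{−1}·S_1(f) ) ) + λ_2^{−1}·( S_1( f^{−1}·S_2(f) ) − S_3( f^{−1}·S_2(f) ) ) + λ_3^{−1}·( S_2( f^{−1}·S_3(f) ) − S_1( f^{−1}·S_3(f) ) ) = 0. (Equation (4.15) of the paper, obtained by cyclic summation of (4.14).) -/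
/-- Equation (4.15): the mKP algebraic Fay identity, obtained by cyclic
summation of the mKP differential Fay identities (4.14). -/
theorem stmt_16 {k A : Type*} [CommRing k] [Ring A] [Algebra k A]
    (lam1 lam2 lam3 : kˣ)
    (d : A →ₗ[k] A)
    (hd : ∀ a b, d (a * b) = d a * b + a * d b)
    (S1 S2 S3 : A →ₐ[k] A)
    (h12 : ∀ a, S1 (S2 a) = S2 (S1 a))
    (h23 : ∀ a, S2 (S3 a) = S3 (S2 a))
    (h31 : ∀ a, S3 (S1 a) = S1 (S3 a))
    (f g : A) (hfg : f * g = 1) (hgf : g * f = 1)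
    (hFay12 : (↑lam2⁻¹ : k) • (S1 (g * S2 f) - g * S2 f)
        - (↑lam1⁻¹ : k) • (S2 (g * S1 f) - g * S1 f)
      = S1 (g * d f) - S2 (g * d f))
    (hFay23 : (↑lam3⁻¹ : k) • (S2 (g * S3 f) - g * S3 f)
        - (↑lam2⁻¹ : k) • (S3 (g * S2 f) - g * S2 f)
      = S2 (g * d f) - S3 (g * d f))
    (hFay31 : (↑lam1⁻¹ : k) • (S3 (g * S1 f) - g * S1 f)
        - (↑lam3⁻¹ : k) • (S1 (g * S3 f) - g * S3 f)
      = S3 (g * d f) - S1 (g * d f)) :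
    (↑lam1⁻¹ : k) • (S3 (g * S1 f) - S2 (g * S1 f))
      + (↑lam2⁻¹ : k) • (S1 (g * S2 f) - S3 (g * S2 f))
      + (↑lam3⁻¹ : k) • (S2 (g * S3 f) - S1 (g * S3 f)) = 0 := by
  linear_combination (norm := module) hFay12 + hFay23 + hFay31
end

section
/- Let f ∈ R be invertible and φ ∈ R, and suppose χ_{n+1}(f) = − f·χ_n(φ) for all n ≥ 1. Then f satisfies the mKP hierarchy in the form χ_n( f^{−1}·χ_{m+1}(f) ) = χ_m( f^{−1}·χ_{n+1}(f) ) for all m, n ≥ 1. (The duality between the mKP and potential KP hierarchies via the linear system (4.24) of the paper.) -/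
/-- The duality between the mKP and potential KP hierarchies via the linear
system (4.24): if `χ_{n+1}(f) = − f·χ_n(φ)` for all `n ≥ 1`, then `f`
satisfies the mKP hierarchy `χ_n(f⁻¹·χ_{m+1}(f)) = χ_m(f⁻¹·χ_{n+1}(f))`. -/
theorem stmt_17 {R : Type*} [Ring R]
    (χ : ℕ → R →+ R)
    (hχ0 : ∀ a, χ 0 a = a)
    (hLeib : ∀ n a b, χ n (a * b) = ∑ k ∈ Finset.range (n + 1), χ k a * χ (n - k) b)
    (hcomm : ∀ m n a, χ m (χ n a) = χ n (χ m a))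
    (f g : R) (hfg : f * g = 1) (hgf : g * f = 1)
    (φ : R)
    (hlin : ∀ n, 1 ≤ n → χ (n + 1) f = -(f * χ n φ)) :
    ∀ m n, 1 ≤ m → 1 ≤ n →
      χ n (g * χ (m + 1) f) = χ m (g * χ (n + 1) f) := by
  intro m n hm hn
  rw [hlin m hm, hlin n hn, mul_neg, mul_neg, ← mul_assoc, ← mul_assoc, hgf, one_mul, one_mul,
    map_neg, map_neg, hcomm]
end

section
/- Let f ∈ A be invertible and a_1, a_2 ∈ A, and suppose δ_1(f) = − f·a_1 and δ_2(f) = − f·a_2. Then δ_1(a_2) − δ_2(a_1) = [ a_1, a_2 ]. In particular, if δ_i = ∂_{s_i} and a_i = ∂_{t_i}(φ) for derivations ∂_{t_i} and an element φ, this is the dual self-dual Yang–Mills hierarchy equation ∂_{s_1}∂_{t_2}(φ) − ∂_{s_2}∂_{t_1}(φ) = [ ∂_{t_1}(φ), ∂_{t_2}(φ) ]. (Equations (4.29)/(4.35) of the paper as integrability conditions of the linear system (4.33).) -/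
/-- Equations (4.29)/(4.35): the integrability condition of the linear system
(4.33): if `δ_1(f) = −f·a_1` and `δ_2(f) = −f·a_2` with `f` invertible, then
`δ_1(a_2) − δ_2(a_1) = [a_1, a_2]`. -/
theorem stmt_18 {A : Type*} [Ring A]
    (δ1 δ2 : A →+ A)
    (hδ1 : ∀ a b, δ1 (a * b) = δ1 a * b + a * δ1 b)
    (hδ2 : ∀ a b, δ2 (a * b) = δ2 a * b + a * δ2 b)
    (hcomm : ∀ a, δ1 (δ2 a) = δ2 (δ1 a))
    (f g a1 a2 : A) (hfg : f * g = 1) (hgf : g * f = 1)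
    (h1 : δ1 f = -(f * a1)) (h2 : δ2 f = -(f * a2)) :
    δ1 a2 - δ2 a1 = a1 * a2 - a2 * a1 := by
  have key : f * (δ1 a2 - δ2 a1) = f * (a1 * a2 - a2 * a1) := by
    have e1 : δ1 (δ2 f) = f * a1 * a2 - f * δ1 a2 := by
      rw [h2, map_neg, hδ1, h1]; noncomm_ring
    have e2 : δ2 (δ1 f) = f * a2 * a1 - f * δ2 a1 := by
      rw [h1, map_neg, hδ2, h2]; noncomm_ring
    have := hcomm f
    rw [e1, e2] at this
    linear_combination (norm := noncomm_ring) -this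
  calc δ1 a2 - δ2 a1 = g * (f * (δ1 a2 - δ2 a1)) := by rw [← mul_assoc, hgf, one_mul]
    _ = g * (f * (a1 * a2 - a2 * a1)) := by rw [key]
    _ = a1 * a2 - a2 * a1 := by rw [← mul_assoc, hgf, one_mul]
end

section
/- Let W ∈ R be invertible and L, K ∈ R with d(W) = L·W and Θ(W) = K·W. Then d(K) = Θ(L)·K − K·L. (Equation (2.16) of the paper: the integrability condition for the discrete extension Θ(W) = K·W of the linear system.) -/
/-- Equation (2.16): the integrability condition for the discrete extension
`Θ(W) = K·W` of the linear system `d(W) = L·W`. -/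
theorem stmt_19 {R : Type*} [Ring R]
    (d : R →+ R)
    (hd : ∀ a b, d (a * b) = d a * b + a * d b)
    (Θ : R ≃+* R)
    (hΘd : ∀ a, Θ (d a) = d (Θ a))
    (W V L K : R) (hWV : W * V = 1) (hVW : V * W = 1)
    (hL : d W = L * W) (hK : Θ W = K * W) :
    d K = Θ L * K - K * L := by
  have h1 : d K * W + K * (L * W) = Θ L * (K * W) := by
    rw [← hL, ← hd, ← hK, ← hΘd, hL, map_mul, hK]
  have h2 : d K * W = Θ L * K * W - K * L * W := by
    rw [mul_assoc (Θ L), mul_assoc K, ← h1]; abel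
  calc d K = d K * W * V := by rw [mul_assoc, hWV, mul_one]
    _ = (Θ L * K * W - K * L * W) * V := by rw [h2]
    _ = Θ L * K - K * L := by
        rw [sub_mul, mul_assoc, hWV, mul_one, mul_assoc, hWV, mul_one]
end
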